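/- arXiv:gr-qc/9306020 — 3 statements merged into one kernel-verified Lean document; each statement's English description precedes it below -/
import Mathlib

section
/- Let ε > 0, C ≥ 0, r ≥ ε, and let w, w̃ > 0, F, F̃ ∈ [0, C]. With u² := w² + F/r² and ũ² := w̃² + F̃/r², one has w·w̃ − √(1+u²)·w̃²/√(1+ũ²) ≤ (1 + C·ε⁻²) · w·w̃/(1+w̃²). -/
open Real

lemma sub_le_div_of_sq_sub_sq_le {a b M : ℝ} (ha : 0 < a) (hb : 0 ≤ b) (hM : 0 ≤ M)
    (h : a ^ 2 - b ^ 2 ≤ M) : a - b ≤ M / a := by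
  rw [le_div_iff₀ ha]
  rcases le_total b a with hba | hab <;> nlinarith

lemma div_sq_le_mul_inv_sq {F C r ε : ℝ} (hε : 0 < ε) (hr : ε ≤ r) (hC : 0 ≤ C)
    (hF : F ≤ C) : F / r ^ 2 ≤ C * ε⁻¹ ^ 2 := by
  have hr₀ : 0 < r := hε.trans_le hr
  rw [div_eq_mul_inv, ← inv_pow]
  gcongr

theorem integrand_upper_bound
    (ε C r w w' F F' u u' : ℝ)
    (hε : 0 < ε) (hC : 0 ≤ C) (hr : ε ≤ r)
    (hw : 0 < w) (hw' : 0 < w')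
    (hF : F ∈ Set.Icc 0 C) (hF' : F' ∈ Set.Icc 0 C)
    (hu : u ^ 2 = w ^ 2 + F / r ^ 2) (hu' : u' ^ 2 = w' ^ 2 + F' / r ^ 2) :
    w * w' - Real.sqrt (1 + u ^ 2) * w' ^ 2 / Real.sqrt (1 + u' ^ 2) ≤
      (1 + C * ε⁻¹ ^ 2) * (w * w' / (1 + w' ^ 2)) := by
  have hF_div : 0 ≤ F / r ^ 2 := div_nonneg hF.1 (sq_nonneg r)
  have hF'_div : 0 ≤ F' / r ^ 2 := div_nonneg hF'.1 (sq_nonneg r)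
  have hF'_le := div_sq_le_mul_inv_sq hε hr hC hF'.2
  set K := 1 + C * ε⁻¹ ^ 2
  set A := √(1 + u ^ 2)
  set B := √(1 + u' ^ 2)
  have hA : A ^ 2 = 1 + w ^ 2 + F / r ^ 2 := by rw [sq_sqrt (by positivity), hu]; ring
  have hB : B ^ 2 = 1 + w' ^ 2 + F' / r ^ 2 := by rw [sq_sqrt (by positivity), hu']; ring
  have hB_pos : 0 < B := sqrt_pos.2 (by positivity)
  have hB_lower : 1 + w' ^ 2 ≤ B ^ 2 := by linarith
  -- (wB)² - (Aw')² = w²(1 + F'/r²) - w'²(1 + F/r²)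
  have hdiff : (w * B) ^ 2 - (A * w') ^ 2 ≤ w ^ 2 * K := by
    rw [mul_pow, mul_pow, hA, hB]
    nlinarith [mul_nonneg (sq_nonneg w') hF_div]
  calc w * w' - A * w' ^ 2 / B = w' / B * (w * B - A * w') := by field_simp
    _ ≤ w' / B * (w ^ 2 * K / (w * B)) := by
        gcongr
        exact sub_le_div_of_sq_sub_sq_le (by positivity) (by positivity) (by positivity) hdiff
    _ = K * (w * w' / B ^ 2) := by field_simp
    _ ≤ K * (w * w' / (1 + w' ^ 2)) := by gcongr
end

section
/- Let ε > 0, C ≥ 0, r ≥ ε, and let w < 0, w̃ ≤ 0, F, F̃ ∈ [0, C]. With u² := w² + F/r² and ũ² := w̃² + F̃/r², one has w·w̃ − √(1+u²)·w̃²/√(1+ũ²) ≥ −(1 + C·ε⁻²)·|w̃|/√(1+w²). -/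
open Real

/-!
Put `A = √(1 + w² + C ε⁻²)`, which bounds `√(1 + u²)` since `F / r² ≤ C ε⁻²`. As `|w̃| ≤ √(1 + ũ²)`,
the subtracted term is at most `A |w̃|`, while `w w̃ = |w| |w̃|`. It remains to bound
`A - |w| = (1 + C ε⁻²) / (A + |w|)`, and `A + |w| ≥ √(1 + w²)`.
-/

lemma sq_div_sqrt_le_abs {x y : ℝ} (h : x ^ 2 ≤ y) : x ^ 2 / √y ≤ |x| := by
  rcases (sqrt_nonneg y).eq_or_lt with h0 | hpos
  · rw [← h0, div_zero]
    exact abs_nonneg x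
  · rw [div_le_iff₀ hpos, ← sq_abs, sq]
    exact mul_le_mul_of_nonneg_left (abs_le_sqrt h) (abs_nonneg x)

lemma sqrt_one_add_sq_add_sub_abs_le (w c : ℝ) (hc : 0 ≤ c) :
    √(1 + w ^ 2 + c) - |w| ≤ (1 + c) / √(1 + w ^ 2) := by
  set A := √(1 + w ^ 2 + c)
  have hA : A ^ 2 = 1 + w ^ 2 + c := sq_sqrt (by positivity)
  have hsum : √(1 + w ^ 2) ≤ A + |w| := by
    have : √(1 + w ^ 2) ≤ A := sqrt_le_sqrt (by linarith)
    linarith [abs_nonneg w]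
  have hpos : 0 < √(1 + w ^ 2) := by positivity
  calc A - |w| = (1 + c) / (A + |w|) := by
        rw [eq_div_iff (by linarith)]
        linear_combination hA - sq_abs w
    _ ≤ (1 + c) / √(1 + w ^ 2) := div_le_div_of_nonneg_left (by positivity) hpos hsum

theorem integrand_lower_bound_both_nonpositive_general
    (ε C r w w' F F' u u' : ℝ)
    (hε : 0 < ε) (hr : ε ≤ r)
    (hw : w < 0) (hw' : w' ≤ 0)
    (hF : F ∈ Set.Icc 0 C) (hF' : F' ∈ Set.Icc 0 C)
    (hu : u ^ 2 = w ^ 2 + F / r ^ 2) (hu' : u' ^ 2 = w' ^ 2 + F' / r ^ 2) :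
    -(1 + C * ε⁻¹ ^ 2) * |w'| / Real.sqrt (1 + w ^ 2) ≤
      w * w' - Real.sqrt (1 + u ^ 2) * w' ^ 2 / Real.sqrt (1 + u' ^ 2) := by
  have hC : 0 ≤ C := hF.1.trans hF.2
  have hFr : F / r ^ 2 ≤ C * ε⁻¹ ^ 2 := by
    rw [inv_pow, ← div_eq_mul_inv]
    exact div_le_div₀ hC hF.2 (by positivity) (pow_le_pow_left₀ hε.le hr 2)
  have hu_le : √(1 + u ^ 2) ≤ √(1 + w ^ 2 + C * ε⁻¹ ^ 2) := sqrt_le_sqrt (by rw [hu]; linarith)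
  have hw'_le : w' ^ 2 / √(1 + u' ^ 2) ≤ |w'| :=
    sq_div_sqrt_le_abs (by rw [hu']; linarith [div_nonneg hF'.1 (sq_nonneg r)])
  have hww' : |w| * |w'| = w * w' := by
    rw [← abs_mul, abs_of_nonneg (mul_nonneg_of_nonpos_of_nonpos hw.le hw')]
  calc -(1 + C * ε⁻¹ ^ 2) * |w'| / √(1 + w ^ 2)
        = -(|w'| * ((1 + C * ε⁻¹ ^ 2) / √(1 + w ^ 2))) := by ring
    _ ≤ -(|w'| * (√(1 + w ^ 2 + C * ε⁻¹ ^ 2) - |w|)) :=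
        neg_le_neg (mul_le_mul_of_nonneg_left
          (sqrt_one_add_sq_add_sub_abs_le w _ (by positivity)) (abs_nonneg w'))
    _ = |w| * |w'| - √(1 + w ^ 2 + C * ε⁻¹ ^ 2) * |w'| := by ring
    _ ≤ w * w' - √(1 + u ^ 2) * (w' ^ 2 / √(1 + u' ^ 2)) := by
        rw [hww']
        exact sub_le_sub_left (mul_le_mul hu_le hw'_le (by positivity) (sqrt_nonneg _)) _
    _ = w * w' - √(1 + u ^ 2) * w' ^ 2 / √(1 + u' ^ 2) := by rw [mul_div_assoc]

theorem integrand_lower_bound_both_nonpositive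
    (ε C r w w' F F' u u' : ℝ)
    (hε : 0 < ε) (hC : 0 ≤ C) (hr : ε ≤ r)
    (hw : w < 0) (hw' : w' ≤ 0)
    (hF : F ∈ Set.Icc 0 C) (hF' : F' ∈ Set.Icc 0 C)
    (hu : u ^ 2 = w ^ 2 + F / r ^ 2) (hu' : u' ^ 2 = w' ^ 2 + F' / r ^ 2) :
    -(1 + C * ε⁻¹ ^ 2) * |w'| / Real.sqrt (1 + w ^ 2) ≤
      w * w' - Real.sqrt (1 + u ^ 2) * w' ^ 2 / Real.sqrt (1 + u' ^ 2) :=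
  integrand_lower_bound_both_nonpositive_general ε C r w w' F F' u u' hε hr hw hw' hF hF' hu hu'
end

section
/- Let f : ℝ³ × ℝ³ → ℝ be nonnegative, measurable and bounded by S, and suppose f(x, ·) is supported in a set V_x ⊂ ℝ³ of Lebesgue measure at most μ₀ for each x. Fix x with ‖x‖ = r ≥ ε, suppose F(x,ṽ) := r²‖ṽ‖² − (x⬝ṽ)² ≤ C on the support, and suppose the radial momenta w̃ := (x⬝ṽ)/r of points in the support lie in [0, P]. Then ∫ f(x,ṽ) · w·w̃/(1+w̃²) dṽ ≤ S · π C ε⁻² · w · (1/2)·ln(1+P²) for any w ≥ 0. -/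
/-!
Write `e = r⁻¹ • x` for the radial unit vector. The hypotheses say that the support of `f x` lies
in the cylinder of radius `√C / r` around the axis `ℝ e`, over the slab `0 ≤ ⟪e, v⟫ ≤ P`, and the
weight depends only on the axial coordinate `⟪e, v⟫`. In an orthonormal basis starting with `e`,
Fubini bounds the integral by `S w` times the area `π C / r² ≤ π C / ε²` of the disc
cross-section times `∫₀^P t / (1 + t²) dt = ½ log (1 + P²)`.
-/

open Real RealInnerProductSpace MeasureTheory

theorem integral_id_div_one_add_sq (a b : ℝ) :
    ∫ t in a..b, t / (1 + t ^ 2) = (log (1 + b ^ 2) - log (1 + a ^ 2)) / 2 := by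
  have hpos (t : ℝ) : 0 < 1 + t ^ 2 := by positivity
  rw [intervalIntegral.integral_eq_sub_of_hasDerivAt (f := fun t => log (1 + t ^ 2) / 2)]
  · ring
  · intro t _
    refine ((((hasDerivAt_pow 2 t).const_add 1).log (hpos t).ne').div_const 2).congr_deriv ?_
    field_simp
    ring
  · exact (continuous_id.div (by fun_prop) fun t => (hpos t).ne').intervalIntegrable _ _

theorem lintegral_Icc_ofReal_id_div_one_add_sq {P : ℝ} (hP : 0 ≤ P) :
    ∫⁻ t in Set.Icc 0 P, ENNReal.ofReal (t / (1 + t ^ 2)) =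
      ENNReal.ofReal (log (1 + P ^ 2) / 2) := by
  have hcont : Continuous fun t : ℝ => t / (1 + t ^ 2) :=
    continuous_id.div (by fun_prop) fun t => by positivity
  rw [← ofReal_integral_eq_lintegral_ofReal hcont.integrableOn_Icc
      ((ae_restrict_iff' measurableSet_Icc).2 (.of_forall fun t ht => by
        have := ht.1; positivity)),
    integral_Icc_eq_integral_Ioc, ← intervalIntegral.integral_of_le hP,
    integral_id_div_one_add_sq]
  simp

theorem integral_le_of_lintegral_enorm_le {α : Type*} [MeasurableSpace α] {μ : Measure α}
    {F : α → ℝ} {B : ℝ} (hB : 0 ≤ B) (h : ∫⁻ a, ‖F a‖ₑ ∂μ ≤ ENNReal.ofReal B) :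
    ∫ a, F a ∂μ ≤ B := by
  have := (enorm_integral_le_lintegral_enorm F).trans h
  rw [Real.enorm_eq_ofReal_abs, ENNReal.ofReal_le_ofReal_iff hB] at this
  exact (le_abs_self _).trans this

namespace EuclideanSpace

theorem norm_sq_eq_sq_add_norm_tail_sq {n : ℕ} (u : EuclideanSpace ℝ (Fin (n + 1))) :
    ‖u‖ ^ 2 = u 0 ^ 2 + ‖WithLp.toLp 2 (Fin.tail (WithLp.ofLp u))‖ ^ 2 := by
  simp [EuclideanSpace.norm_sq_eq, Fin.sum_univ_succ, Fin.tail]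

theorem lintegral_apply_zero_mul_tail {n : ℕ} {g : ℝ → ENNReal}
    {h : EuclideanSpace ℝ (Fin n) → ENNReal} (hg : Measurable g) (hh : Measurable h) :
    ∫⁻ u : EuclideanSpace ℝ (Fin (n + 1)), g (u 0) * h (WithLp.toLp 2 (Fin.tail (WithLp.ofLp u))) =
      (∫⁻ t, g t) * ∫⁻ z, h z := by
  rw [← (PiLp.volume_preserving_toLp _).lintegral_comp_emb
      (MeasurableEquiv.toLp 2 _).measurableEmbedding,
    ← (PiLp.volume_preserving_toLp _).lintegral_comp_emb
      (MeasurableEquiv.toLp 2 _).measurableEmbedding,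
    ← lintegral_prod_mul (f := g) (g := fun z => h (WithLp.toLp 2 z)) hg.aemeasurable
      (hh.comp (MeasurableEquiv.toLp 2 _).measurable).aemeasurable, ← Measure.volume_eq_prod,
    ← (volume_preserving_piFinSuccAbove (fun _ : Fin (n + 1) => ℝ) 0).lintegral_comp_emb
      (MeasurableEquiv.piFinSuccAbove _ 0).measurableEmbedding]
  rfl

end EuclideanSpace

section Cylinder

variable {E : Type*} [NormedAddCommGroup E] [InnerProductSpace ℝ E]

theorem norm_sub_inner_smul_sq {e : E} (he : ‖e‖ = 1) (v : E) :
    ‖v - ⟪e, v⟫ • e‖ ^ 2 = ‖v‖ ^ 2 - ⟪e, v⟫ ^ 2 := by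
  rw [norm_sub_sq_real, inner_smul_right, norm_smul, real_inner_comm, he, Real.norm_eq_abs,
    mul_one, sq_abs]
  ring

variable [FiniteDimensional ℝ E] {n : ℕ}

theorem exists_orthonormalBasis_apply_zero_eq (hn : Module.finrank ℝ E = n + 1) {e : E}
    (he : ‖e‖ = 1) : ∃ b : OrthonormalBasis (Fin (n + 1)) ℝ E, b 0 = e := by
  have : Orthonormal ℝ (({0} : Set (Fin (n + 1))).domRestrict fun _ => e) :=
    orthonormal_subsingleton_iff.2 fun _ => he
  obtain ⟨b, hb⟩ := this.exists_orthonormalBasis_extension_of_card_eq (by simpa using hn)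
  exact ⟨b, hb 0 rfl⟩

variable [MeasurableSpace E] [BorelSpace E]

theorem lintegral_indicator_cylinder (hn : Module.finrank ℝ E = n + 1) {e : E} (he : ‖e‖ = 1)
    {g : ℝ → ENNReal} (hg : Measurable g) (ρ : ℝ) :
    ∫⁻ v, {v : E | ‖v - ⟪e, v⟫ • e‖ ≤ ρ}.indicator (fun v => g ⟪e, v⟫) v =
      (∫⁻ t, g t) * volume (Metric.closedBall (0 : EuclideanSpace ℝ (Fin n)) ρ) := by
  obtain ⟨b, hb⟩ := exists_orthonormalBasis_apply_zero_eq hn he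
  set tail : EuclideanSpace ℝ (Fin (n + 1)) → EuclideanSpace ℝ (Fin n) :=
    fun u => WithLp.toLp 2 (Fin.tail (WithLp.ofLp u))
  have hcoord (v : E) : b.repr v 0 = ⟪e, v⟫ := by
    rw [OrthonormalBasis.repr_apply_apply, hb]
  have hperp (v : E) : ‖v - ⟪e, v⟫ • e‖ = ‖tail (b.repr v)‖ := by
    rw [← sq_eq_sq₀ (norm_nonneg _) (norm_nonneg _), norm_sub_inner_smul_sq he,
      ← b.repr.norm_map v, EuclideanSpace.norm_sq_eq_sq_add_norm_tail_sq, hcoord]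
    ring
  calc ∫⁻ v, {v : E | ‖v - ⟪e, v⟫ • e‖ ≤ ρ}.indicator (fun v => g ⟪e, v⟫) v
      = ∫⁻ v, g (b.repr v 0) * (Metric.closedBall 0 ρ).indicator 1 (tail (b.repr v)) := by
        congr! 2 with v
        by_cases hv : ‖v - ⟪e, v⟫ • e‖ ≤ ρ
        · simp [hv, hcoord, ← hperp]
        · simp [hv, ← hperp]
    _ = ∫⁻ u, g (u 0) * (Metric.closedBall 0 ρ).indicator 1 (tail u) :=
        b.measurePreserving_repr.lintegral_comp_emb b.repr.toMeasurableEquiv.measurableEmbedding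
          (fun u => g (u 0) * (Metric.closedBall 0 ρ).indicator 1 (tail u))
    _ = _ := by
      rw [EuclideanSpace.lintegral_apply_zero_mul_tail hg
          (measurable_one.indicator measurableSet_closedBall),
        lintegral_indicator_one measurableSet_closedBall]

theorem integral_mul_div_one_add_inner_sq_le (hn : Module.finrank ℝ E = n + 1) {e : E}
    (he : ‖e‖ = 1) {f : E → ℝ} {S ρ P w : ℝ} (hf0 : ∀ v, 0 ≤ f v) (hfS : ∀ v, f v ≤ S)
    (hsupp : ∀ v, f v ≠ 0 → ‖v - ⟪e, v⟫ • e‖ ≤ ρ ∧ ⟪e, v⟫ ∈ Set.Icc 0 P)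
    (hP : 0 ≤ P) (hw : 0 ≤ w) :
    ∫ v, f v * (w * ⟪e, v⟫ / (1 + ⟪e, v⟫ ^ 2)) ≤
      S * w * (log (1 + P ^ 2) / 2) *
        (volume (Metric.closedBall (0 : EuclideanSpace ℝ (Fin n)) ρ)).toReal := by
  have hS : 0 ≤ S := (hf0 0).trans (hfS 0)
  have hL : 0 ≤ log (1 + P ^ 2) := log_nonneg (by nlinarith)
  set g : ℝ → ENNReal := (Set.Icc 0 P).indicator fun t => ENNReal.ofReal (t / (1 + t ^ 2))
    with hg
  have hg_meas : Measurable g := (by fun_prop : Measurable fun t : ℝ =>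
    ENNReal.ofReal (t / (1 + t ^ 2))).indicator measurableSet_Icc
  have hptw (v : E) : ‖f v * (w * ⟪e, v⟫ / (1 + ⟪e, v⟫ ^ 2))‖ₑ ≤
      ENNReal.ofReal (S * w) * {v | ‖v - ⟪e, v⟫ • e‖ ≤ ρ}.indicator (fun v => g ⟪e, v⟫) v := by
    by_cases hv : f v = 0
    · simp [hv]
    obtain ⟨hcyl, hslab⟩ := hsupp v hv
    have hq : 0 ≤ ⟪e, v⟫ / (1 + ⟪e, v⟫ ^ 2) := div_nonneg hslab.1 (by positivity)
    rw [Set.indicator_of_mem (show v ∈ {v | ‖v - ⟪e, v⟫ • e‖ ≤ ρ} from hcyl), hg,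
      Set.indicator_of_mem hslab, ← ENNReal.ofReal_mul (by positivity),
      Real.enorm_of_nonneg (by rw [mul_div_assoc]; have := hf0 v; positivity)]
    refine ENNReal.ofReal_le_ofReal ?_
    calc f v * (w * ⟪e, v⟫ / (1 + ⟪e, v⟫ ^ 2)) = f v * (w * (⟪e, v⟫ / (1 + ⟪e, v⟫ ^ 2))) := by
          ring
      _ ≤ S * (w * (⟪e, v⟫ / (1 + ⟪e, v⟫ ^ 2))) := by gcongr; exact hfS v
      _ = S * w * (⟪e, v⟫ / (1 + ⟪e, v⟫ ^ 2)) := by ring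
  refine integral_le_of_lintegral_enorm_le (by positivity) ?_
  calc _ ≤ ∫⁻ v, ENNReal.ofReal (S * w) *
          {v | ‖v - ⟪e, v⟫ • e‖ ≤ ρ}.indicator (fun v => g ⟪e, v⟫) v :=
        lintegral_mono hptw
    _ = ENNReal.ofReal (S * w) * (ENNReal.ofReal (log (1 + P ^ 2) / 2) *
          volume (Metric.closedBall (0 : EuclideanSpace ℝ (Fin n)) ρ)) := by
        rw [lintegral_const_mul' _ _ ENNReal.ofReal_ne_top,
          lintegral_indicator_cylinder hn he hg_meas, hg, lintegral_indicator measurableSet_Icc,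
          lintegral_Icc_ofReal_id_div_one_add_sq hP]
    _ = _ := by
        rw [ENNReal.ofReal_mul (p := S * w * (log (1 + P ^ 2) / 2)) (by positivity),
          ENNReal.ofReal_toReal measure_closedBall_lt_top.ne,
          ENNReal.ofReal_mul (p := S * w) (by positivity), mul_assoc]

end Cylinder

theorem velocity_integral_bound_general
    (f : EuclideanSpace ℝ (Fin 3) → EuclideanSpace ℝ (Fin 3) → ℝ)
    (S ε C P r w : ℝ)
    (x : EuclideanSpace ℝ (Fin 3))
    (hf0 : ∀ y v, 0 ≤ f y v) (hfS : ∀ y v, f y v ≤ S)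
    (hr : ‖x‖ = r) (hε : 0 < ε) (hrε : ε ≤ r)
    (hC : 0 ≤ C) (hP : 0 ≤ P)
    (hsupp : ∀ v, f x v ≠ 0 →
      r ^ 2 * ‖v‖ ^ 2 - ⟪x, v⟫ ^ 2 ≤ C ∧
      0 ≤ ⟪x, v⟫ / r ∧ ⟪x, v⟫ / r ≤ P)
    (hw : 0 ≤ w) :
    (∫ v, f x v * (w * (⟪x, v⟫ / r) / (1 + (⟪x, v⟫ / r) ^ 2))) ≤
      S * (π * C * ε⁻¹ ^ 2) * w * ((1 / 2) * Real.log (1 + P ^ 2)) := by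
  have hr0 : 0 < r := hε.trans_le hrε
  obtain ⟨e, he, rfl⟩ : ∃ e : EuclideanSpace ℝ (Fin 3), ‖e‖ = 1 ∧ x = r • e :=
    ⟨r⁻¹ • x, by rw [norm_smul, hr, norm_inv, Real.norm_of_nonneg hr0.le, inv_mul_cancel₀ hr0.ne'],
      (smul_inv_smul₀ hr0.ne' x).symm⟩
  simp only [real_inner_smul_left, mul_div_cancel_left₀ _ hr0.ne'] at hsupp ⊢
  have hcyl (v) (hv : f (r • e) v ≠ 0) : ‖v - ⟪e, v⟫ • e‖ ≤ √C / r ∧ ⟪e, v⟫ ∈ Set.Icc 0 P := by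
    obtain ⟨hF, hslab⟩ := hsupp v hv
    refine ⟨?_, hslab⟩
    rw [← pow_le_pow_iff_left₀ (norm_nonneg _) (by positivity) two_ne_zero,
      norm_sub_inner_smul_sq he, div_pow, sq_sqrt hC, le_div_iff₀ (by positivity)]
    linarith
  refine (integral_mul_div_one_add_inner_sq_le (n := 2) (by simp) he (hf0 _) (hfS _) hcyl hP hw).trans ?_
  have hρ : (√C / r) ^ 2 ≤ C * ε⁻¹ ^ 2 := by
    rw [div_pow, sq_sqrt hC, div_eq_mul_inv, ← inv_pow]
    gcongr
  have hS : 0 ≤ S := (hf0 0 0).trans (hfS 0 0)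
  have hL : 0 ≤ log (1 + P ^ 2) := log_nonneg (by nlinarith)
  rw [EuclideanSpace.volume_closedBall_fin_two, ENNReal.toReal_mul, ENNReal.toReal_pow,
    ENNReal.toReal_ofReal (by positivity), ENNReal.toReal_ofReal pi_nonneg]
  calc S * w * (log (1 + P ^ 2) / 2) * ((√C / r) ^ 2 * π)
      ≤ S * w * (log (1 + P ^ 2) / 2) * (C * ε⁻¹ ^ 2 * π) := by gcongr
    _ = S * (π * C * ε⁻¹ ^ 2) * w * ((1 / 2) * log (1 + P ^ 2)) := by ring

theorem velocity_integral_bound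
    (f : EuclideanSpace ℝ (Fin 3) → EuclideanSpace ℝ (Fin 3) → ℝ)
    (S μ₀ ε C P r w : ℝ)
    (x : EuclideanSpace ℝ (Fin 3))
    (hmeas : Measurable (f x))
    (hf0 : ∀ y v, 0 ≤ f y v) (hfS : ∀ y v, f y v ≤ S)
    (hsuppmeas : ∀ y, volume (Function.support (f y)) ≤ ENNReal.ofReal μ₀)
    (hr : ‖x‖ = r) (hε : 0 < ε) (hrε : ε ≤ r)
    (hC : 0 ≤ C) (hP : 0 ≤ P)
    (hsupp : ∀ v, f x v ≠ 0 →
      r ^ 2 * ‖v‖ ^ 2 - ⟪x, v⟫ ^ 2 ≤ C ∧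
      0 ≤ ⟪x, v⟫ / r ∧ ⟪x, v⟫ / r ≤ P)
    (hw : 0 ≤ w)
    (hInt : Integrable (fun v => f x v * (w * (⟪x, v⟫ / r) / (1 + (⟪x, v⟫ / r) ^ 2)))) :
    (∫ v, f x v * (w * (⟪x, v⟫ / r) / (1 + (⟪x, v⟫ / r) ^ 2))) ≤
      S * (π * C * ε⁻¹ ^ 2) * w * ((1 / 2) * Real.log (1 + P ^ 2)) :=
  velocity_integral_bound_general f S ε C P r w x hf0 hfS hr hε hrε hC hP hsupp hw
end
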